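/- arXiv:1712.00800 — 4 statements merged into one kernel-verified Lean document; each statement's English description precedes it below -/
import Mathlib

section
/- Let Z₁,…,Zₙ be independent random variables with Zᵢ ∈ [0, bᵢ] almost surely, bᵢ ∈ (0,1], and μᵢ = E[Zᵢ]. Then for every t ≥ 0, Pr(∑ᵢ Zᵢ ≥ t) ≤ exp(∑ᵢ μᵢ(1 + (e−2)bᵢ)) · e^{−t}. -/
/-!
Chernoff's method with the exponent `1`: by Markov's inequality applied to `exp (∑ i, Z i)` and
independence, the probability is at most `exp (-t) * ∏ i, E[exp (Z i)]`. On `[0, b]` with `b ≤ 1`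
the exponential lies below the line `1 + x * (1 + (e - 2) * b)`, because the tail
`∑_{k ≥ 2} x ^ k / k!` of its series is at most `x ^ 2 * (e - 2)`; taking expectations and using
`1 + y ≤ exp y` gives `E[exp (Z i)] ≤ exp (μᵢ * (1 + (e - 2) * bᵢ))`.
-/

open MeasureTheory ProbabilityTheory

open scoped Nat

theorem Real.exp_le_one_add_add_mul_sq {x : ℝ} (hx0 : 0 ≤ x) (hx1 : x ≤ 1) :
    Real.exp x ≤ 1 + x + (Real.exp 1 - 2) * x ^ 2 := by
  have tail (y : ℝ) : HasSum (fun k : ℕ ↦ y ^ (k + 2) / (k + 2)!) (Real.exp y - (1 + y)) := by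
    have := (hasSum_nat_add_iff' 2).2 (NormedSpace.expSeries_div_hasSum_exp y)
    simpa [Finset.sum_range_succ, ← Real.exp_eq_exp_ℝ] using this
  have key := hasSum_le (fun k ↦ ?_) (tail x) ((tail 1).mul_left (x ^ 2))
  · norm_num at key
    linarith
  rw [one_pow, mul_one_div, pow_add]
  gcongr
  exact mul_le_of_le_one_left (sq_nonneg x) (pow_le_one₀ hx0 hx1)

theorem Real.exp_le_one_add_mul_of_mem_Icc {x b : ℝ} (hx : x ∈ Set.Icc 0 b) (hb : b ≤ 1) :
    Real.exp x ≤ 1 + x * (1 + (Real.exp 1 - 2) * b) := by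
  have he : 0 ≤ Real.exp 1 - 2 := by linarith [Real.add_one_le_exp 1]
  have hxb : x ^ 2 ≤ x * b := by rw [sq]; exact mul_le_mul_of_nonneg_left hx.2 hx.1
  calc Real.exp x ≤ 1 + x + (Real.exp 1 - 2) * x ^ 2 :=
        Real.exp_le_one_add_add_mul_sq hx.1 (hx.2.trans hb)
    _ ≤ 1 + x + (Real.exp 1 - 2) * (x * b) := by gcongr
    _ = 1 + x * (1 + (Real.exp 1 - 2) * b) := by ring

namespace ProbabilityTheory

variable {Ω : Type*} [MeasurableSpace Ω] {μ : Measure Ω} {X : Ω → ℝ} {b : ℝ}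

theorem integrable_exp_mul_of_ae_le [IsFiniteMeasure μ] (hX : AEMeasurable X μ)
    (hXb : ∀ᵐ ω ∂μ, X ω ≤ b) {s : ℝ} (hs : 0 ≤ s) : Integrable (fun ω ↦ Real.exp (s * X ω)) μ := by
  refine .of_bound (hX.const_mul s).exp.aestronglyMeasurable (Real.exp (s * b)) ?_
  filter_upwards [hXb] with ω hω
  rw [Real.norm_of_nonneg (Real.exp_nonneg _)]
  gcongr

theorem mgf_one_le_of_ae_mem_Icc [IsProbabilityMeasure μ] (hX : AEMeasurable X μ)
    (hXb : ∀ᵐ ω ∂μ, X ω ∈ Set.Icc 0 b) (hb : b ≤ 1) :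
    mgf X μ 1 ≤ Real.exp (μ[X] * (1 + (Real.exp 1 - 2) * b)) := by
  set c := 1 + (Real.exp 1 - 2) * b
  have hXint : Integrable X μ := .of_mem_Icc 0 b hX hXb
  calc mgf X μ 1 ≤ ∫ ω, (1 + X ω * c) ∂μ := by
        refine integral_mono_ae ?_ ((integrable_const 1).add (hXint.mul_const c)) ?_
        · exact integrable_exp_mul_of_ae_le hX (hXb.mono fun _ h ↦ h.2) zero_le_one
        filter_upwards [hXb] with ω hω
        simpa using Real.exp_le_one_add_mul_of_mem_Icc hω hb
    _ = μ[X] * c + 1 := by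
        rw [integral_add (integrable_const 1) (hXint.mul_const c), integral_const,
          integral_mul_const, probReal_univ, one_smul, add_comm]
    _ ≤ Real.exp (μ[X] * c) := Real.add_one_le_exp _

end ProbabilityTheory

theorem stmt_5_general {Ω : Type*} [MeasurableSpace Ω] (μ : Measure Ω) [IsProbabilityMeasure μ]
    (n : ℕ) (Z : Fin n → Ω → ℝ) (b : Fin n → ℝ)
    (hb1 : ∀ i, b i ≤ 1)
    (hmeas : ∀ i, Measurable (Z i))
    (hindep : iIndepFun Z μ)
    (hbound : ∀ i, ∀ᵐ ω ∂μ, Z i ω ∈ Set.Icc 0 (b i))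
    (m : Fin n → ℝ) (hm : ∀ i, m i = ∫ ω, Z i ω ∂μ)
    (t : ℝ) :
    (μ {ω | t ≤ ∑ i, Z i ω}).toReal ≤
      Real.exp (∑ i, m i * (1 + (Real.exp 1 - 2) * b i)) * Real.exp (-t) := by
  have hint : Integrable (fun ω ↦ Real.exp (1 * (∑ i, Z i) ω)) μ :=
    hindep.integrable_exp_mul_sum hmeas fun i _ ↦
      integrable_exp_mul_of_ae_le (hmeas i).aemeasurable ((hbound i).mono fun _ h ↦ h.2)
        zero_le_one
  calc (μ {ω | t ≤ ∑ i, Z i ω}).toReal = μ.real {ω | t ≤ (∑ i, Z i) ω} := by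
        simp only [measureReal_def, Finset.sum_apply]
    _ ≤ Real.exp (-1 * t) * mgf (∑ i, Z i) μ 1 := measure_ge_le_exp_mul_mgf t zero_le_one hint
    _ = Real.exp (-t) * ∏ i, mgf (Z i) μ 1 := by rw [hindep.mgf_sum hmeas, neg_one_mul]
    _ ≤ Real.exp (-t) * ∏ i, Real.exp (m i * (1 + (Real.exp 1 - 2) * b i)) := by
        gcongr with i
        · exact fun i _ ↦ mgf_nonneg
        rw [hm i]
        exact mgf_one_le_of_ae_mem_Icc (hmeas i).aemeasurable (hbound i) (hb1 i)
    _ = Real.exp (∑ i, m i * (1 + (Real.exp 1 - 2) * b i)) * Real.exp (-t) := by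
        rw [← Real.exp_sum, mul_comm]

theorem stmt_5 {Ω : Type*} [MeasurableSpace Ω] (μ : Measure Ω) [IsProbabilityMeasure μ]
    (n : ℕ) (Z : Fin n → Ω → ℝ) (b : Fin n → ℝ)
    (hb0 : ∀ i, 0 < b i) (hb1 : ∀ i, b i ≤ 1)
    (hmeas : ∀ i, Measurable (Z i))
    (hindep : iIndepFun Z μ)
    (hbound : ∀ i, ∀ᵐ ω ∂μ, Z i ω ∈ Set.Icc 0 (b i))
    (m : Fin n → ℝ) (hm : ∀ i, m i = ∫ ω, Z i ω ∂μ)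
    (t : ℝ) (ht : 0 ≤ t) :
    (μ {ω | t ≤ ∑ i, Z i ω}).toReal ≤
      Real.exp (∑ i, m i * (1 + (Real.exp 1 - 2) * b i)) * Real.exp (-t) :=
  stmt_5_general μ n Z b hb1 hmeas hindep hbound m hm t
end

section
/- Let φ: ℝⁿ → ℝ≥0 be a semi-norm and for positive integer t define OPT(t,1) = max{φ(x) : ‖x‖₂ ≤ 1, ‖x‖₀ ≤ t}. Then for every t ≥ k ≥ 1, OPT(t,1) ≤ √⌈t/k⌉ · OPT(k,1). -/
/-! Split the support of a `t`-sparse vector `x` into `m = ⌈t/k⌉` blocks of at most `k`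
coordinates. On each block `φ` is at most `OPT(k,1)` times the Euclidean norm of the block, so by
subadditivity and Cauchy–Schwarz `φ x ≤ √m ‖x‖ OPT(k,1)`. The induction peels off one block at a
time, using `a + √m b ≤ √(m+1) √(a² + b²)`. A sublinear function on `ℝⁿ` is bounded on the unit
ball, so the suprema defining `OPT` are genuine. -/

/-- The optimal value of the semi-norm SPCA problem with right-hand sides `t` (sparsity)
and `w` (Euclidean norm bound). -/
noncomputable def OPT (n : ℕ) (φ : EuclideanSpace ℝ (Fin n) → ℝ) (t : ℕ) (w : ℝ) : ℝ :=
  sSup (φ '' {x | ‖x‖ ≤ w ∧ (Finset.univ.filter (fun i => x i ≠ 0)).card ≤ t})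

open Finset

section Sublinear

variable {E : Type*} [AddCommGroup E] [Module ℝ E] {φ : E → ℝ}

lemma map_zero_of_posHomog (hhom : ∀ l : ℝ, 0 ≤ l → ∀ x, φ (l • x) = l * φ x) : φ 0 = 0 := by
  simpa using hhom 0 le_rfl 0

lemma map_smul_le_abs_mul (hhom : ∀ l : ℝ, 0 ≤ l → ∀ x, φ (l • x) = l * φ x) (c : ℝ) (v : E) :
    φ (c • v) ≤ |c| * (|φ v| + |φ (-v)|) := by
  rcases le_or_gt 0 c with hc | hc
  · rw [hhom c hc, abs_of_nonneg hc]
    gcongr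
    exact (le_abs_self _).trans (le_add_of_nonneg_right (abs_nonneg _))
  · rw [← neg_smul_neg, hhom (-c) (by linarith), abs_of_neg hc]
    exact mul_le_mul_of_nonneg_left
      ((le_abs_self _).trans (le_add_of_nonneg_left (abs_nonneg _))) (by linarith)

end Sublinear

lemma add_sqrt_mul_le_sqrt_add_one_mul {a b c m : ℝ} (hm : 0 ≤ m) (hc : 0 ≤ c)
    (habc : a ^ 2 + b ^ 2 = c ^ 2) : a + √m * b ≤ √(m + 1) * c := by
  rw [← Real.sqrt_sq hc, ← Real.sqrt_mul (by linarith)]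
  refine (le_abs_self _).trans (Real.abs_le_sqrt ?_)
  nlinarith [sq_nonneg (√m * a - b), Real.sq_sqrt hm]

section Coordinates

variable {ι : Type*}

section

variable [DecidableEq ι]

noncomputable def coordRestrict (s : Finset ι) (x : EuclideanSpace ℝ ι) : EuclideanSpace ℝ ι :=
  WithLp.toLp 2 (fun i => if i ∈ s then x i else 0)

@[simp]
lemma coordRestrict_apply (s : Finset ι) (x : EuclideanSpace ℝ ι) (i : ι) :
    coordRestrict s x i = if i ∈ s then x i else 0 := rfl

end

variable [Fintype ι]

noncomputable def coordSupport (x : EuclideanSpace ℝ ι) : Finset ι :=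
  univ.filter (fun i => x i ≠ 0)

lemma coordSupport_eq_empty_iff {x : EuclideanSpace ℝ ι} : coordSupport x = ∅ ↔ x = 0 := by
  refine ⟨fun h => ?_, fun h => by simp [coordSupport, h]⟩
  ext i
  by_contra hi
  exact filter_eq_empty_iff.mp h (mem_univ i) hi

lemma coordSupport_smul_subset (c : ℝ) (x : EuclideanSpace ℝ ι) :
    coordSupport (c • x) ⊆ coordSupport x := by
  intro i
  simp +contextual [coordSupport]

theorem bddAbove_image_norm_le_one {φ : EuclideanSpace ℝ ι → ℝ}
    (hhom : ∀ l : ℝ, 0 ≤ l → ∀ x, φ (l • x) = l * φ x) (hsub : ∀ u v, φ (u + v) ≤ φ u + φ v) :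
    BddAbove (φ '' {x | ‖x‖ ≤ 1}) := by
  classical
  set e := EuclideanSpace.basisFun ι ℝ
  refine ⟨∑ i, (|φ (e i)| + |φ (-e i)|), ?_⟩
  rintro _ ⟨x, hx, rfl⟩
  calc φ x = φ (∑ i, x i • e i) := congrArg φ (e.sum_repr x).symm
    _ ≤ ∑ i, φ (x i • e i) :=
      le_sum_of_subadditive φ (map_zero_of_posHomog hhom).le hsub _ _
    _ ≤ ∑ i, |x i| * (|φ (e i)| + |φ (-e i)|) :=
      sum_le_sum fun i _ => map_smul_le_abs_mul hhom _ _
    _ ≤ ∑ i, (|φ (e i)| + |φ (-e i)|) := by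
      refine sum_le_sum fun i _ => mul_le_of_le_one_left (by positivity) ?_
      exact (PiLp.norm_apply_le x i).trans hx

variable [DecidableEq ι]

lemma coordSupport_coordRestrict (s : Finset ι) (x : EuclideanSpace ℝ ι) :
    coordSupport (coordRestrict s x) = s ∩ coordSupport x := by
  ext i
  by_cases h : i ∈ s <;> simp [coordSupport, h]

lemma coordRestrict_add_coordRestrict_compl (s : Finset ι) (x : EuclideanSpace ℝ ι) :
    coordRestrict s x + coordRestrict sᶜ x = x := by
  ext i
  by_cases h : i ∈ s <;> simp [h]

lemma norm_sq_coordRestrict_add_norm_sq_coordRestrict_compl (s : Finset ι)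
    (x : EuclideanSpace ℝ ι) :
    ‖coordRestrict s x‖ ^ 2 + ‖coordRestrict sᶜ x‖ ^ 2 = ‖x‖ ^ 2 := by
  simp only [EuclideanSpace.norm_sq_eq, ← sum_add_distrib]
  refine sum_congr rfl fun i _ => ?_
  by_cases h : i ∈ s <;> simp [h]

theorem le_sqrt_mul_norm_mul_of_card_coordSupport_le {φ : EuclideanSpace ℝ ι → ℝ}
    (hsub : ∀ u v, φ (u + v) ≤ φ u + φ v) {k : ℕ} {C : ℝ} (hC : 0 ≤ C)
    (hsparse : ∀ x, #(coordSupport x) ≤ k → φ x ≤ ‖x‖ * C) (m : ℕ) :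
    ∀ x, #(coordSupport x) ≤ m * k → φ x ≤ √m * ‖x‖ * C := by
  induction m with
  | zero =>
    intro x hx
    obtain rfl : x = 0 := coordSupport_eq_empty_iff.mp (card_eq_zero.mp (by simpa using hx))
    simpa using hsparse 0 (by simp [coordSupport])
  | succ m ih =>
    intro x hx
    obtain ⟨T, hTS, hT⟩ := exists_subset_card_eq (min_le_right k #(coordSupport x))
    set x₁ := coordRestrict T x
    set x₂ := coordRestrict Tᶜ x
    have h₁ : #(coordSupport x₁) ≤ k := by
      rw [coordSupport_coordRestrict, inter_eq_left.mpr hTS]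
      omega
    have h₂ : #(coordSupport x₂) ≤ m * k := by
      rw [coordSupport_coordRestrict, inter_comm, ← sdiff_eq_inter_compl,
        card_sdiff_of_subset hTS]
      rw [Nat.succ_mul] at hx
      omega
    calc φ x = φ (x₁ + x₂) := by rw [coordRestrict_add_coordRestrict_compl]
      _ ≤ φ x₁ + φ x₂ := hsub _ _
      _ ≤ ‖x₁‖ * C + √m * ‖x₂‖ * C := add_le_add (hsparse _ h₁) (ih _ h₂)
      _ = (‖x₁‖ + √m * ‖x₂‖) * C := by ring
      _ ≤ √(m + 1 : ℕ) * ‖x‖ * C := by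
        push_cast
        gcongr
        exact add_sqrt_mul_le_sqrt_add_one_mul (Nat.cast_nonneg m) (norm_nonneg x)
          (norm_sq_coordRestrict_add_norm_sq_coordRestrict_compl T x)

end Coordinates

section OPT

variable {n : ℕ} {φ : EuclideanSpace ℝ (Fin n) → ℝ}

lemma bddAbove_OPT_set (hhom : ∀ l : ℝ, 0 ≤ l → ∀ x, φ (l • x) = l * φ x)
    (hsub : ∀ u v, φ (u + v) ≤ φ u + φ v) (k : ℕ) :
    BddAbove (φ '' {x | ‖x‖ ≤ 1 ∧ #(coordSupport x) ≤ k}) :=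
  (bddAbove_image_norm_le_one hhom hsub).mono (Set.image_mono fun _ hx => hx.1)

lemma OPT_nonneg (hhom : ∀ l : ℝ, 0 ≤ l → ∀ x, φ (l • x) = l * φ x)
    (hsub : ∀ u v, φ (u + v) ≤ φ u + φ v) (k : ℕ) : 0 ≤ OPT n φ k 1 := by
  refine (map_zero_of_posHomog hhom).symm.le.trans (le_csSup (bddAbove_OPT_set hhom hsub k) ?_)
  exact ⟨0, ⟨by simp, by simp⟩, rfl⟩

lemma le_norm_mul_OPT (hhom : ∀ l : ℝ, 0 ≤ l → ∀ x, φ (l • x) = l * φ x)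
    (hsub : ∀ u v, φ (u + v) ≤ φ u + φ v)
    {k : ℕ} {x : EuclideanSpace ℝ (Fin n)} (hx : #(coordSupport x) ≤ k) :
    φ x ≤ ‖x‖ * OPT n φ k 1 := by
  rcases eq_or_ne x 0 with rfl | hx0
  · simp [map_zero_of_posHomog hhom]
  have hnorm : 0 < ‖x‖ := norm_pos_iff.mpr hx0
  have hunit : φ (‖x‖⁻¹ • x) ≤ OPT n φ k 1 := by
    refine le_csSup (bddAbove_OPT_set hhom hsub k) ⟨_, ⟨?_, ?_⟩, rfl⟩
    · rw [norm_smul, norm_inv, norm_norm, inv_mul_cancel₀ hnorm.ne']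
    · exact (card_le_card (coordSupport_smul_subset _ x)).trans hx
  calc φ x = ‖x‖ * φ (‖x‖⁻¹ • x) := by rw [← hhom _ hnorm.le, smul_inv_smul₀ hnorm.ne']
    _ ≤ ‖x‖ * OPT n φ k 1 := by gcongr

end OPT

theorem stmt_8_general (n : ℕ) (φ : EuclideanSpace ℝ (Fin n) → ℝ)
    (hhom : ∀ l : ℝ, 0 ≤ l → ∀ x, φ (l • x) = l * φ x)
    (hsub : ∀ u v, φ (u + v) ≤ φ u + φ v)
    (k t : ℕ) (hk : 1 ≤ k) :
    OPT n φ t 1 ≤ Real.sqrt ((⌈(t : ℝ) / (k : ℝ)⌉ : ℤ) : ℝ) * OPT n φ k 1 := by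
  set m := ⌈(t : ℝ) / k⌉₊
  have hm : ((⌈(t : ℝ) / k⌉ : ℤ) : ℝ) = m := by
    rw [← Int.natCast_ceil_eq_ceil (by positivity), Int.cast_natCast]
  have htm : t ≤ m * k := by
    have : (t : ℝ) / k ≤ m := Nat.le_ceil _
    rw [div_le_iff₀ (by exact_mod_cast hk)] at this
    exact_mod_cast this
  have hC := OPT_nonneg hhom hsub k
  rw [hm]
  refine Real.sSup_le ?_ (by positivity)
  rintro _ ⟨x, ⟨hx1, hxt⟩, rfl⟩
  calc φ x ≤ √m * ‖x‖ * OPT n φ k 1 :=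
        le_sqrt_mul_norm_mul_of_card_coordSupport_le hsub hC
          (fun y hy => le_norm_mul_OPT hhom hsub hy) m x (hxt.trans htm)
    _ ≤ √m * 1 * OPT n φ k 1 := by gcongr
    _ = √m * OPT n φ k 1 := by rw [mul_one]

theorem stmt_8 (n : ℕ) (φ : EuclideanSpace ℝ (Fin n) → ℝ)
    (hhom : ∀ l : ℝ, 0 ≤ l → ∀ x, φ (l • x) = l * φ x)
    (hsub : ∀ u v, φ (u + v) ≤ φ u + φ v)
    (hnonneg : ∀ x, 0 ≤ φ x)
    (hzero : φ 0 = 0)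
    (k t : ℕ) (hk : 1 ≤ k) (hkt : k ≤ t) :
    OPT n φ t 1 ≤ Real.sqrt ((⌈(t : ℝ) / (k : ℝ)⌉ : ℤ) : ℝ) * OPT n φ k 1 :=
  stmt_8_general n φ hhom hsub k t hk
end

section
/- Let x ∈ ℝⁿ with ‖x‖₁ ≤ √k and ‖x‖₂ ≤ 1, let s = γk with γ ∈ (0,1), and let pᵢ = min{s|xᵢ|/‖x‖₁, 1}. Then ∑_{i=1}^n xᵢ²/pᵢ ≤ 1/γ + 1 (where terms with xᵢ = 0 are taken to be 0). -/
theorem stmt_12 (n k : ℕ) (hk : 1 ≤ k) (γ : ℝ) (hγ0 : 0 < γ) (hγ1 : γ < 1)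
    (x : Fin n → ℝ) (hx : x ≠ 0)
    (h1 : ∑ i, |x i| ≤ Real.sqrt k)
    (h2 : ∑ i, (x i) ^ 2 ≤ 1)
    (s : ℝ) (hs : s = γ * k)
    (p : Fin n → ℝ) (hp : ∀ i, p i = min (s * |x i| / ∑ j, |x j|) 1) :
    ∑ i, (if x i = 0 then (0 : ℝ) else (x i) ^ 2 / p i) ≤ 1 / γ + 1 := by
  set L : ℝ := ∑ j, |x j| with hL
  have hkpos : (0:ℝ) < k := by exact_mod_cast Nat.lt_of_lt_of_le Nat.zero_lt_one hk
  have hspos : 0 < s := by rw [hs]; positivity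
  have hLpos : 0 < L := by
    obtain ⟨i, hi⟩ : ∃ i, x i ≠ 0 := by
      by_contra h
      push_neg at h
      exact hx (funext h)
    have : 0 < |x i| := abs_pos.mpr hi
    exact Finset.sum_pos' (fun j _ => abs_nonneg _) ⟨i, Finset.mem_univ i, this⟩
  have key : ∀ i ∈ Finset.univ, (if x i = 0 then (0:ℝ) else (x i)^2 / p i)
      ≤ |x i| * L / s + (x i)^2 := by
    intro i _
    by_cases hxi : x i = 0
    · simp only [hxi, if_true]
      positivity
    · simp only [hxi, if_false]
      have habs : 0 < |x i| := abs_pos.mpr hxi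
      rw [hp i]
      rcases min_cases (s * |x i| / L) 1 with ⟨hm, _⟩ | ⟨hm, _⟩
      · rw [hm]
        have : (x i)^2 / (s * |x i| / L) = |x i| * L / s := by
          field_simp
          rw [← sq_abs]
        rw [this]
        nlinarith [sq_nonneg (x i)]
      · rw [hm, div_one]
        have := div_nonneg (mul_nonneg habs.le hLpos.le) hspos.le
        linarith
  calc ∑ i, (if x i = 0 then (0:ℝ) else (x i)^2 / p i)
      ≤ ∑ i, (|x i| * L / s + (x i)^2) := Finset.sum_le_sum key
    _ = L * L / s + ∑ i, (x i)^2 := by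
        rw [Finset.sum_add_distrib, ← Finset.sum_div, ← Finset.sum_mul]
    _ ≤ 1 / γ + 1 := by
        have hL2 : L * L ≤ k := by
          have hk0 : (0:ℝ) ≤ k := le_of_lt hkpos
          nlinarith [Real.sq_sqrt hk0, Real.sqrt_nonneg (k:ℝ), h1]
        have h3 : L * L / s ≤ (k:ℝ) / s := by gcongr
        have h4 : (k:ℝ) / s = 1 / γ := by
          rw [hs]; field_simp
        linarith
end

section
/- Let x ∈ ℝⁿ with ‖x‖₁ ≤ √k and ‖x‖₂ ≤ 1, s = γk, γ ∈ (0,1), and pᵢ = min{s|xᵢ|/‖x‖₁, 1}. Then ∑_{i=1}^n xᵢ⁴/pᵢ³ ≤ 1/(γ³k) + 1 (terms with xᵢ = 0 taken as 0). -/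
theorem stmt_13 (n k : ℕ) (hk : 1 ≤ k) (γ : ℝ) (hγ0 : 0 < γ) (hγ1 : γ < 1)
    (x : Fin n → ℝ) (hx : x ≠ 0)
    (h1 : ∑ i, |x i| ≤ Real.sqrt k)
    (h2 : ∑ i, (x i) ^ 2 ≤ 1)
    (s : ℝ) (hs : s = γ * k)
    (p : Fin n → ℝ) (hp : ∀ i, p i = min (s * |x i| / ∑ j, |x j|) 1) :
    ∑ i, (if x i = 0 then (0 : ℝ) else (x i) ^ 4 / (p i) ^ 3) ≤ 1 / (γ ^ 3 * k) + 1 := by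
  set S : ℝ := ∑ j, |x j| with hS
  have hk' : (1 : ℝ) ≤ (k : ℝ) := by exact_mod_cast hk
  have hkpos : (0 : ℝ) < k := by linarith
  have hspos : 0 < s := by rw [hs]; positivity
  have hSpos : 0 < S := by
    obtain ⟨i, hi⟩ : ∃ i, x i ≠ 0 := by
      by_contra h; push_neg at h; exact hx (funext h)
    have : 0 < |x i| := abs_pos.mpr hi
    calc (0:ℝ) < |x i| := this
      _ ≤ S := Finset.single_le_sum (fun j _ => abs_nonneg (x j)) (Finset.mem_univ i)
  -- termwise bound
  have key : ∀ i, (if x i = 0 then (0 : ℝ) else (x i) ^ 4 / (p i) ^ 3)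
      ≤ |x i| * S ^ 3 / s ^ 3 + (x i) ^ 4 := by
    intro i
    by_cases hxi : x i = 0
    · simp only [if_pos hxi]; positivity
    have habs : 0 < |x i| := abs_pos.mpr hxi
    rw [if_neg hxi, hp i]
    rcases le_or_gt (s * |x i| / S) 1 with h | h
    · rw [min_eq_left h]
      have h4 : (x i) ^ 4 = |x i| ^ 4 := by rw [← abs_pow]; rw [abs_of_nonneg (by positivity)]
      have : (x i) ^ 4 / (s * |x i| / S) ^ 3 = |x i| * S ^ 3 / s ^ 3 := by
        rw [h4]; field_simp
      rw [this]
      nlinarith [pow_nonneg (sq_nonneg (x i)) 2, sq_nonneg (x i)]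
    · rw [min_eq_right (le_of_lt h)]
      have : (x i) ^ 4 / (1:ℝ) ^ 3 = (x i) ^ 4 := by norm_num
      rw [this]
      have : 0 ≤ |x i| * S ^ 3 / s ^ 3 := by positivity
      linarith
  calc ∑ i, (if x i = 0 then (0 : ℝ) else (x i) ^ 4 / (p i) ^ 3)
      ≤ ∑ i, (|x i| * S ^ 3 / s ^ 3 + (x i) ^ 4) :=
        Finset.sum_le_sum fun i _ => key i
    _ = S * S ^ 3 / s ^ 3 + ∑ i, (x i) ^ 4 := by
        rw [Finset.sum_add_distrib, ← Finset.sum_div, ← Finset.sum_mul]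
    _ ≤ 1 / (γ ^ 3 * k) + 1 := by
        have hsum4 : ∑ i, (x i) ^ 4 ≤ 1 := by
          have h4 : ∀ i ∈ Finset.univ, (x i) ^ 4 ≤ (x i) ^ 2 * ∑ j, (x j) ^ 2 := by
            intro i _
            have : (x i) ^ 2 ≤ ∑ j, (x j) ^ 2 :=
              Finset.single_le_sum (fun j _ => sq_nonneg (x j)) (Finset.mem_univ i)
            have h2i : (0:ℝ) ≤ (x i) ^ 2 := sq_nonneg _
            nlinarith
          calc ∑ i, (x i) ^ 4 ≤ ∑ i, (x i) ^ 2 * ∑ j, (x j) ^ 2 := Finset.sum_le_sum h4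
            _ = (∑ i, (x i) ^ 2) * ∑ j, (x j) ^ 2 := by rw [← Finset.sum_mul]
            _ ≤ 1 := by nlinarith [Finset.sum_nonneg fun i (_ : i ∈ Finset.univ) => sq_nonneg (x i)]
        have hSk : S ^ 2 ≤ k := by
          have hsq : Real.sqrt k ^ 2 = k := Real.sq_sqrt (le_of_lt hkpos)
          nlinarith [Real.sqrt_nonneg (k:ℝ)]
        have hmain : S * S ^ 3 / s ^ 3 ≤ 1 / (γ ^ 3 * k) := by
          rw [hs, div_le_div_iff₀ (by positivity) (by positivity)]
          have : S * S ^ 3 = (S ^ 2) ^ 2 := by ring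
          rw [this]
          have h1 : (S ^ 2) ^ 2 ≤ (k:ℝ) ^ 2 := by nlinarith [sq_nonneg S]
          calc (S ^ 2) ^ 2 * (γ ^ 3 * k) ≤ (k:ℝ)^2 * (γ ^ 3 * k) := by
                have : (0:ℝ) ≤ γ ^ 3 * k := by positivity
                exact mul_le_mul_of_nonneg_right h1 this
            _ = (γ * k) ^ 3 := by ring
            _ ≤ 1 * (γ * k) ^ 3 := by linarith
        linarith
end
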